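/- For all positive real numbers a < b, let ā = (a+b)/2, ǧ = √(ab), and â = (b−a)/(log b − log a). Then 0 ≤ ā − ǧ²/â ≤ (√(ā·â) + ǧ)·(log b − log a). -/

import Mathlib

/-!
Write `L = log b - log a`, `M = (b - a) / L`, `A = (a + b) / 2`, `G = √(ab)`.
Both bounds reduce to two elementary estimates of `L`: `log t ≤ sinh (log t) = (t - t⁻¹) / 2`
at `t = b / a` gives `G² ≤ A M`, which is the lower bound, and `log t ≥ 1 - t⁻¹` gives `M ≤ b`.
For the upper bound, `A - G² / M = (√(AM) - G) (√(AM) + G) / M`, and `√(AM) - G ≤ b - a = M L`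
because `√(AM) ≤ b` and `G ≥ a`.
-/

open Real

namespace Real

lemma log_le_sub_inv_div_two {x : ℝ} (hx : 1 ≤ x) : log x ≤ (x - x⁻¹) / 2 := by
  rw [← sinh_log (by linarith)]
  exact self_le_sinh_iff.2 (log_nonneg hx)

/-- The logarithmic mean of `a ≠ b`; at `a = b` this is `0 / 0 = 0`, not `a`. -/
noncomputable def logMean (a b : ℝ) : ℝ := (b - a) / (log b - log a)

variable {a b : ℝ}

lemma logMean_pos (ha : 0 < a) (hab : a < b) : 0 < logMean a b :=
  div_pos (sub_pos.2 hab) (sub_pos.2 (log_lt_log ha hab))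

lemma sub_div_logMean (hab : a ≠ b) : (b - a) / logMean a b = log b - log a := by
  rw [logMean, div_div_cancel₀ (sub_ne_zero.2 hab.symm)]

lemma logMean_le_right (ha : 0 < a) (hab : a < b) : logMean a b ≤ b := by
  have hb : 0 < b := ha.trans hab
  have hlog : 1 - a / b ≤ log b - log a := by
    simpa [log_div hb.ne' ha.ne'] using one_sub_inv_le_log_of_pos (div_pos hb ha)
  rw [logMean, div_le_iff₀ (sub_pos.2 (log_lt_log ha hab))]
  calc b - a = b * (1 - a / b) := by field_simp
    _ ≤ b * (log b - log a) := mul_le_mul_of_nonneg_left hlog hb.le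

lemma mul_le_arithMean_mul_logMean (ha : 0 < a) (hab : a < b) :
    a * b ≤ (a + b) / 2 * logMean a b := by
  have hb : 0 < b := ha.trans hab
  have hlog : log b - log a ≤ (b / a - (b / a)⁻¹) / 2 := by
    rw [← log_div hb.ne' ha.ne']
    exact log_le_sub_inv_div_two ((one_le_div ha).2 hab.le)
  rw [logMean, mul_div_assoc', le_div_iff₀ (sub_pos.2 (log_lt_log ha hab))]
  calc a * b * (log b - log a) ≤ a * b * ((b / a - (b / a)⁻¹) / 2) :=
        mul_le_mul_of_nonneg_left hlog (mul_pos ha hb).le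
    _ = (a + b) / 2 * (b - a) := by field_simp; ring

end Real

lemma sub_sq_div_le_of_sq_eq {A M G S d : ℝ} (hM : 0 < M) (hS : S ^ 2 = A * M)
    (hSG : 0 ≤ S + G) (hd : S - G ≤ d) : A - G ^ 2 / M ≤ (S + G) * (d / M) := by
  calc A - G ^ 2 / M = (S - G) * (S + G) / M := by field_simp; linear_combination -hS
    _ ≤ d * (S + G) / M := by gcongr
    _ = (S + G) * (d / M) := by ring

/-- For `0 < a < b`, with `ā` the arithmetic, `ǧ` the geometric and `â` the logarithmic
mean, one has `0 ≤ ā − ǧ²/â ≤ (√(ā·â) + ǧ)·(log b − log a)`. -/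
theorem arith_sub_geomSq_div_logMean_bound (a b : ℝ) (ha : 0 < a) (hab : a < b) :
    0 ≤ (a + b) / 2 - Real.sqrt (a * b) ^ 2 / ((b - a) / (Real.log b - Real.log a)) ∧
    (a + b) / 2 - Real.sqrt (a * b) ^ 2 / ((b - a) / (Real.log b - Real.log a))
      ≤ (Real.sqrt (((a + b) / 2) * ((b - a) / (Real.log b - Real.log a)))
          + Real.sqrt (a * b)) * (Real.log b - Real.log a) := by
  have hb : 0 < b := ha.trans hab
  have hM := logMean_pos ha hab
  rw [← logMean, ← sub_div_logMean hab.ne]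
  constructor
  · rw [sub_nonneg, div_le_iff₀ hM, sq_sqrt (mul_pos ha hb).le]
    exact mul_le_arithMean_mul_logMean ha hab
  · refine sub_sq_div_le_of_sq_eq hM (sq_sqrt (by positivity)) (by positivity) ?_
    have hS_le : √((a + b) / 2 * logMean a b) ≤ b := by
      rw [sqrt_le_left hb.le, sq]
      exact mul_le_mul (by linarith) (logMean_le_right ha hab) hM.le hb.le
    have hG_ge : a ≤ √(a * b) := by
      rw [le_sqrt' ha]
      nlinarith
    linarith
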